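/- Let ψ be an Orlicz function satisfying the Δ²-condition. For every integer N ≥ 1 and every β ∈ (0,1), there exist A > 0 and h₀ ∈ (0,1) such that 1/ψ(A·ψ⁻¹(1/h^N)) ≤ h^{1/β} for every 0 < h < h₀. -/

import Mathlib

open Set Filter

/-- An Orlicz function: a strictly convex function `psi : [0,oo) -> [0,oo)` with `psi 0 = 0`,
`psi` continuous at `0`, and `psi x / x -> oo` as `x -> oo`. -/
def OrliczFunction (ψ : ℝ → ℝ) : Prop :=
  StrictConvexOn ℝ (Ici 0) ψ ∧ (∀ x ∈ Ici (0:ℝ), 0 ≤ ψ x) ∧ ψ 0 = 0 ∧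
    ContinuousWithinAt ψ (Ici 0) 0 ∧ Tendsto (fun x => ψ x / x) atTop atTop

/-- `ψinv` is the inverse of the Orlicz function `ψ`, viewed as an increasing bijection
of `[0,oo)` onto itself. -/
def OrliczInverse (ψ ψinv : ℝ → ℝ) : Prop :=
  (∀ x, 0 ≤ x → ψinv (ψ x) = x) ∧ (∀ y, 0 ≤ y → ψ (ψinv y) = y) ∧ (∀ y, 0 ≤ y → 0 ≤ ψinv y)

/-- The nabla_0-condition. -/
def Nabla0 (ψ : ℝ → ℝ) : Prop :=
  ∀ B > (1:ℝ), ∃ C ≥ (1:ℝ), ∃ x₀ > (0:ℝ), ∀ x y : ℝ, x₀ ≤ x → x ≤ y →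
    ψ (B * x) / ψ x ≤ ψ (C * B * y) / ψ y

/-- The uniform nabla_0-condition. -/
def UniformNabla0 (ψ : ℝ → ℝ) : Prop :=
  ∃ C ≥ (1:ℝ), ∀ B > (1:ℝ), ∃ x₀ > (0:ℝ), ∀ x y : ℝ, x₀ ≤ x → x ≤ y →
    ψ (B * x) / ψ x ≤ ψ (C * B * y) / ψ y

/-- The nabla_2-condition. -/
def Nabla2 (ψ : ℝ → ℝ) : Prop :=
  ∃ β > (1:ℝ), ∃ x₀ > (0:ℝ), ∀ x ≥ x₀, 2 * β * ψ x ≤ ψ (β * x)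

/-- The Delta_2-condition. -/
def Delta2 (ψ : ℝ → ℝ) : Prop :=
  ∃ K > (1:ℝ), ∃ x₀ > (0:ℝ), ∀ x ≥ x₀, ψ (2 * x) ≤ K * ψ x

/-- The Delta^2-condition. -/
def DeltaSquare (ψ : ℝ → ℝ) : Prop :=
  ∃ C > (0:ℝ), ∃ x₀ > (0:ℝ), ∀ x ≥ x₀, (ψ x) ^ 2 ≤ ψ (C * x)

/-!
Iterating `ψ(x)² ≤ ψ(Cx)` gives `ψ(x)^(2^k) ≤ ψ(C^k x)`, so `ψ(C^k ψ⁻¹(t)) ≥ t^(2^k)` for large `t`: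
`t ↦ ψ(A ψ⁻¹(t))` outgrows any prescribed power of `t` once `A = C^k` with `2^k` large.
Taking the power `1/(Nβ)` and `t = h^(-N)` gives the bound `h^(1/β)`.
-/

theorem StrictConvexOn.strictMonoOn_Ici_of_map_zero {f : ℝ → ℝ}
    (hf : StrictConvexOn ℝ (Ici 0) f) (h0 : f 0 = 0) (hnn : ∀ x ∈ Ici (0:ℝ), 0 ≤ f x) :
    StrictMonoOn f (Ici 0) := by
  have lt_of_pos : ∀ {x y : ℝ}, 0 < x → x < y → f x < f y := by
    intro x y hx hxy
    have hseg : x ∈ openSegment ℝ 0 y := by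
      rw [openSegment_eq_Ioo (hx.trans hxy)]
      exact ⟨hx, hxy⟩
    have hlt := hf.lt_on_openSegment self_mem_Ici (hx.trans hxy).le (hx.trans hxy).ne hseg
    rw [h0] at hlt
    exact (lt_max_iff.1 hlt).resolve_left (hnn x hx.le).not_gt
  intro x hx y _ hxy
  rcases (mem_Ici.1 hx).eq_or_lt with rfl | hx
  · calc f 0 = 0 := h0
      _ ≤ f (y / 2) := hnn _ (by simp only [mem_Ici]; linarith)
      _ < f y := lt_of_pos (half_pos hxy) (half_lt_self hxy)
  · exact lt_of_pos hx hxy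

theorem OrliczFunction.strictMonoOn {ψ : ℝ → ℝ} (hψ : OrliczFunction ψ) :
    StrictMonoOn ψ (Ici 0) :=
  hψ.1.strictMonoOn_Ici_of_map_zero hψ.2.2.1 hψ.2.1

theorem DeltaSquare.exists_one_le {ψ : ℝ → ℝ} (hΔ : DeltaSquare ψ)
    (hmono : MonotoneOn ψ (Ici 0)) :
    ∃ C ≥ (1:ℝ), ∃ x₀ > (0:ℝ), ∀ x ≥ x₀, ψ x ^ 2 ≤ ψ (C * x) := by
  obtain ⟨C, hC, x₀, hx₀, hsq⟩ := hΔ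
  refine ⟨max C 1, le_max_right _ _, x₀, hx₀, fun x hx => (hsq x hx).trans ?_⟩
  have hx : 0 ≤ x := hx₀.le.trans hx
  exact hmono (mem_Ici.2 (by positivity)) (mem_Ici.2 (by positivity))
    (mul_le_mul_of_nonneg_right (le_max_left _ _) hx)

theorem pow_two_pow_le_of_sq_le {ψ : ℝ → ℝ} {C x₀ : ℝ} (hC : 1 ≤ C) (hx₀ : 0 ≤ x₀)
    (hsq : ∀ x ≥ x₀, ψ x ^ 2 ≤ ψ (C * x)) (k : ℕ) :
    ∀ x ≥ x₀, ψ x ^ 2 ^ k ≤ ψ (C ^ k * x) := by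
  induction k with
  | zero => simp
  | succ k ih =>
    intro x hx
    calc ψ x ^ 2 ^ (k + 1) = (ψ x ^ 2) ^ 2 ^ k := by ring
      _ ≤ ψ (C * x) ^ 2 ^ k := pow_le_pow_left₀ (sq_nonneg _) (hsq x hx) _
      _ ≤ ψ (C ^ k * (C * x)) := ih _ (by nlinarith)
      _ = ψ (C ^ (k + 1) * x) := by ring_nf

theorem OrliczFunction.exists_rpow_le_apply_mul_inv {ψ ψinv : ℝ → ℝ} (hψ : OrliczFunction ψ)
    (hinv : OrliczInverse ψ ψinv) (hΔ : DeltaSquare ψ) (p : ℝ) :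
    ∃ A > (0:ℝ), ∃ T ≥ (1:ℝ), ∀ t ≥ T, t ^ p ≤ ψ (A * ψinv t) := by
  obtain ⟨-, hψinv, hinv_nonneg⟩ := hinv
  have hmono := hψ.strictMonoOn
  obtain ⟨C, hC, x₀, hx₀, hsq⟩ := hΔ.exists_one_le hmono.monotoneOn
  obtain ⟨k, hk⟩ := pow_unbounded_of_one_lt p one_lt_two
  refine ⟨C ^ k, by positivity, max 1 (ψ x₀), le_max_left _ _, fun t ht => ?_⟩
  have ht : 1 ≤ t ∧ ψ x₀ ≤ t := max_le_iff.1 ht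
  have hu : ψ (ψinv t) = t := hψinv t (by linarith)
  have hx₀u : x₀ ≤ ψinv t :=
    (hmono.le_iff_le (mem_Ici.2 hx₀.le) (mem_Ici.2 (hinv_nonneg t (by linarith)))).1
      (by rw [hu]; exact ht.2)
  calc t ^ p ≤ t ^ ((2 ^ k : ℕ) : ℝ) :=
        Real.rpow_le_rpow_of_exponent_le ht.1 (by push_cast; exact hk.le)
    _ = ψ (ψinv t) ^ 2 ^ k := by rw [Real.rpow_natCast, hu]
    _ ≤ ψ (C ^ k * ψinv t) := pow_two_pow_le_of_sq_le hC hx₀.le hsq k _ hx₀u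

/-- if `ψ` is an Orlicz function satisfying the Delta^2-condition, then for
every `N ≥ 1` and `β ∈ (0,1)` there are `A > 0` and `h₀ ∈ (0,1)` with
`1 / ψ (A ψ⁻¹(1/h^N)) ≤ h^(1/β)` for every `0 < h < h₀`. -/
theorem stmt11 (ψ ψinv : ℝ → ℝ) (hψ : OrliczFunction ψ) (hinv : OrliczInverse ψ ψinv)
    (hΔ : DeltaSquare ψ) (N : ℕ) (hN : 1 ≤ N) (β : ℝ) (hβ : β ∈ Set.Ioo (0:ℝ) 1) :
    ∃ A > (0:ℝ), ∃ h₀ ∈ Set.Ioo (0:ℝ) 1, ∀ h : ℝ, 0 < h → h < h₀ →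
      1 / ψ (A * ψinv (1 / h ^ N)) ≤ h ^ (1 / β) := by
  obtain ⟨A, hA, T, hT, hgrowth⟩ := hψ.exists_rpow_le_apply_mul_inv hinv hΔ (1 / (N * β))
  refine ⟨A, hA, min (1 / 2) (1 / T), ⟨by positivity, (min_le_left _ _).trans_lt (by norm_num)⟩,
    fun h hh0 hh => ?_⟩
  have hh : h < 1 / 2 ∧ h < 1 / T := lt_min_iff.1 hh
  have hT_le : T ≤ 1 / h ^ N := by
    have hhN : h ^ N ≤ h := pow_le_of_le_one hh0.le (by linarith) (by omega)
    exact (le_one_div (by positivity) (by linarith)).1 (hhN.trans hh.2.le)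
  have hpow : (1 / h ^ N) ^ (1 / (N * β)) = 1 / h ^ (1 / β) := by
    rw [Real.div_rpow zero_le_one (by positivity), Real.one_rpow, ← Real.rpow_natCast_mul hh0.le]
    congr 2
    field_simp [hβ.1.ne', (show (0:ℝ) < N by exact_mod_cast hN).ne']
  calc 1 / ψ (A * ψinv (1 / h ^ N)) ≤ 1 / (1 / h ^ N) ^ (1 / (N * β)) :=
        one_div_le_one_div_of_le (by positivity) (hgrowth _ hT_le)
    _ = h ^ (1 / β) := by rw [hpow, one_div_one_div]
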